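/- arXiv:2312.04439 — 2 statements merged into one kernel-verified Lean document; each statement's English description precedes it below -/
import Mathlib

section
/- If f is a monoid automorphism of P_fin0(ℕ), then maxgap(f(X)) = maxgap(X) for every X ∈ P_fin0(ℕ), where maxgap(X) is the largest d > 0 such that some x has X ∩ [x, x+d] = {x, x+d}, and maxgap(X) := 0 if no such d exists. -/
open Pointwise

/-- The reduced power monoid `P_fin0(ℕ)`: finite subsets of ℕ containing 0,
under setwise (pointwise) addition. -/
def P0 : AddSubmonoid (Finset ℕ) where
  carrier := {X : Finset ℕ | (0 : ℕ) ∈ X}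
  add_mem' := fun hx hy => by simpa using Finset.add_mem_add hx hy
  zero_mem' := by simp [Finset.mem_zero]

/-- Maximum of a set in `P0`. -/
def mx (X : P0) : ℕ := X.1.max' ⟨0, X.2⟩

/-- The maximum gap of a finite set `X ⊆ ℕ`: the largest `d > 0` such that
`X ∩ [x, x+d] = {x, x+d}` for some `x`, and `0` if no such `d` exists. -/
noncomputable def maxgap (X : Finset ℕ) : ℕ :=
  sSup {d : ℕ | 0 < d ∧ ∃ x : ℕ, X ∩ Finset.Icc x (x + d) = ({x, x + d} : Finset ℕ)}

/-- gap set -/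
def gapset (X : Finset ℕ) : Set ℕ :=
  {d : ℕ | 0 < d ∧ ∃ x : ℕ, X ∩ Finset.Icc x (x + d) = ({x, x + d} : Finset ℕ)}

lemma maxgap_eq (X : Finset ℕ) : maxgap X = sSup (gapset X) := rfl

lemma mem_gapset_iff (X : Finset ℕ) (d : ℕ) :
    d ∈ gapset X ↔ 0 < d ∧ ∃ x, x ∈ X ∧ x + d ∈ X ∧ ∀ y ∈ X, x < y → y < x + d → False := by
  constructor
  · rintro ⟨hd, x, hx⟩
    refine ⟨hd, x, ?_, ?_, ?_⟩
    · have : x ∈ X ∩ Finset.Icc x (x + d) := by rw [hx]; simp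
      exact (Finset.mem_inter.1 this).1
    · have : x + d ∈ X ∩ Finset.Icc x (x + d) := by rw [hx]; simp
      exact (Finset.mem_inter.1 this).1
    · intro y hy h1 h2
      have : y ∈ X ∩ Finset.Icc x (x + d) := by
        simp [Finset.mem_inter, Finset.mem_Icc, hy]; omega
      rw [hx] at this
      simp [Finset.mem_insert, Finset.mem_singleton] at this
      omega
  · rintro ⟨hd, x, hx, hxd, hmid⟩
    refine ⟨hd, x, ?_⟩
    ext y
    simp only [Finset.mem_inter, Finset.mem_Icc, Finset.mem_insert, Finset.mem_singleton]
    constructor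
    · rintro ⟨hy, h1, h2⟩
      by_contra h
      push_neg at h
      exact hmid y hy (by omega) (by omega)
    · rintro (rfl | rfl)
      · exact ⟨hx, by omega⟩
      · exact ⟨hxd, by omega⟩

lemma gapset_le_max {X : Finset ℕ} (h0 : 0 ∈ X) {d : ℕ} (hd : d ∈ gapset X) :
    d ≤ X.max' ⟨0, h0⟩ := by
  obtain ⟨_, x, _, hxd, _⟩ := (mem_gapset_iff X d).1 hd
  have := Finset.le_max' X _ hxd
  omega

lemma gapset_bdd (X : Finset ℕ) (h0 : 0 ∈ X) : BddAbove (gapset X) :=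
  ⟨X.max' ⟨0, h0⟩, fun d hd => gapset_le_max h0 hd⟩

lemma gapset_nonempty {X : Finset ℕ} (h0 : 0 ∈ X) (hm : 0 < X.max' ⟨0, h0⟩) :
    (gapset X).Nonempty := by
  have hmX : X.max' ⟨0, h0⟩ ∈ X := X.max'_mem _
  have hne : (X.filter (0 < ·)).Nonempty := ⟨X.max' ⟨0, h0⟩, by simp [Finset.mem_filter, hmX, hm]⟩
  set y := (X.filter (0 < ·)).min' hne with hy
  have hyX : y ∈ X.filter (0 < ·) := (X.filter (0 < ·)).min'_mem hne
  rw [Finset.mem_filter] at hyX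
  refine ⟨y, (mem_gapset_iff X y).2 ⟨hyX.2, 0, h0, by simpa using hyX.1, ?_⟩⟩
  intro z hz h1 h2
  have : y ≤ z := Finset.min'_le _ z (by simp [Finset.mem_filter, hz]; omega)
  omega

lemma fill {X : Finset ℕ} (h0 : 0 ∈ X) {d : ℕ} (hd : 0 < d)
    (hb : ∀ g ∈ gapset X, g ≤ d) :
    X + Finset.range d = Finset.range (X.max' ⟨0, h0⟩ + d) := by
  set m := X.max' ⟨0, h0⟩ with hmdef
  ext t
  simp only [Finset.mem_add, Finset.mem_range]
  constructor
  · rintro ⟨x, hx, r, hr, rfl⟩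
    have := Finset.le_max' X x hx
    omega
  · intro ht
    have hne : (X.filter (· ≤ t)).Nonempty := ⟨0, by simp [h0]⟩
    set x := (X.filter (· ≤ t)).max' hne with hxdef
    have hxmem := (X.filter (· ≤ t)).max'_mem hne
    rw [Finset.mem_filter] at hxmem
    obtain ⟨hxX, hxt⟩ := hxmem
    have key : t < x + d := by
      by_cases hex : ∃ y ∈ X, x < y
      · obtain ⟨y0, hy0, hy0x⟩ := hex
        have hne2 : (X.filter (x < ·)).Nonempty := ⟨y0, by simp [hy0, hy0x]⟩
        set y := (X.filter (x < ·)).min' hne2 with hydef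
        have hymem := (X.filter (x < ·)).min'_mem hne2
        rw [Finset.mem_filter] at hymem
        have hg : (y - x) ∈ gapset X := by
          refine (mem_gapset_iff X _).2 ⟨by omega, x, hxX, ?_, ?_⟩
          · rw [show x + (y - x) = y by omega]; exact hymem.1
          · intro z hz h1 h2
            have : y ≤ z := Finset.min'_le _ z (Finset.mem_filter.2 ⟨hz, h1⟩)
            omega
        have hyt : t < y := by
          by_contra h
          push_neg at h
          have := Finset.le_max' (X.filter (· ≤ t)) y (Finset.mem_filter.2 ⟨hymem.1, h⟩)
          omega
        have := hb _ hg
        omega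
      · push_neg at hex
        have hmx : m ≤ x := hex m (X.max'_mem _)
        omega
    exact ⟨x, hxX, t - x, by omega, by omega⟩

lemma unfill {X : Finset ℕ} (h0 : 0 ∈ X) {d : ℕ}
    (heq : X + Finset.range d = Finset.range (X.max' ⟨0, h0⟩ + d)) :
    ∀ g ∈ gapset X, g ≤ d := by
  intro g hg
  set m := X.max' ⟨0, h0⟩ with hmdef
  obtain ⟨hgpos, x, hxX, hxgX, hmid⟩ := (mem_gapset_iff X g).1 hg
  by_contra h
  push_neg at h
  have hxgm : x + g ≤ m := Finset.le_max' X _ hxgX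
  have : x + d ∈ Finset.range (m + d) := by simp [Finset.mem_range]; omega
  rw [← heq] at this
  simp only [Finset.mem_add, Finset.mem_range] at this
  obtain ⟨y, hy, r, hr, hyr⟩ := this
  exact hmid y hy (by omega) (by omega)

/-- intervals as elements of P0 -/
def I (n : ℕ) : P0 := ⟨Finset.range (n + 1), show (0:ℕ) ∈ Finset.range (n + 1) by simp⟩

lemma coe_addP (X Y : P0) : (X + Y).1 = X.1 + Y.1 := rfl

lemma mx_def (X : P0) : mx X = X.1.max' ⟨0, X.2⟩ := rfl

lemma mx_mem (X : P0) : mx X ∈ X.1 := X.1.max'_mem _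

lemma le_mx {X : P0} {a : ℕ} (ha : a ∈ X.1) : a ≤ mx X := Finset.le_max' _ _ ha

lemma mx_add (X Y : P0) : mx (X + Y) = mx X + mx Y := by
  apply le_antisymm
  · apply Finset.max'_le
    intro a ha
    rw [coe_addP] at ha
    simp only [Finset.mem_add] at ha
    obtain ⟨x, hx, y, hy, rfl⟩ := ha
    exact Nat.add_le_add (le_mx hx) (le_mx hy)
  · apply Finset.le_max'
    exact Finset.add_mem_add (mx_mem X) (mx_mem Y)

lemma mx_I (n : ℕ) : mx (I n) = n := by
  apply le_antisymm
  · apply Finset.max'_le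
    intro a ha
    simp only [I, Finset.mem_range] at ha
    omega
  · apply Finset.le_max'
    show n ∈ Finset.range (n + 1)
    simp

lemma I_add (a b : ℕ) : I a + I b = I (a + b) := by
  apply Subtype.ext
  rw [coe_addP]
  ext t
  simp only [I, Finset.mem_add, Finset.mem_range]
  constructor
  · rintro ⟨x, hx, y, hy, rfl⟩; omega
  · intro ht
    exact ⟨min t a, by omega, t - min t a, by omega, by omega⟩

lemma I_zero : I 0 = 0 := by
  apply Subtype.ext
  simp only [I, Finset.range_one]
  rfl

lemma mx_f_I (f : P0 ≃+ P0) (k : ℕ) : mx (f (I k)) = k * mx (f (I 1)) := by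
  induction k with
  | zero => simp [I_zero, mx_def]
  | succ n ih =>
      have : I (n + 1) = I n + I 1 := (I_add n 1).symm
      rw [this, map_add, mx_add, ih]
      ring

/-- The key structural relation: `X + [0, mx X] = [0, 2 mx X]`. -/
lemma key_rel (X : P0) : X + I (mx X) = I (2 * mx X) := by
  apply Subtype.ext
  rw [coe_addP]
  show X.1 + Finset.range (mx X + 1) = Finset.range (2 * mx X + 1)
  have h := fill (X := X.1) X.2 (d := mx X + 1) (by omega)
    (fun g hg => by have h := gapset_le_max X.2 hg; rw [← mx_def] at h; omega)
  rw [h]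
  congr 1
  rw [mx_def]
  omega

lemma mx_f_mul (f : P0 ≃+ P0) (X : P0) : mx (f X) = mx X * mx (f (I 1)) := by
  have h := congrArg f (key_rel X)
  rw [map_add] at h
  have h2 := congrArg mx h
  rw [mx_add, mx_f_I f (mx X), mx_f_I f (2 * mx X)] at h2
  set c := mx (f (I 1))
  have : 2 * mx X * c = mx X * c + mx X * c := by ring
  omega

lemma mx_f (f : P0 ≃+ P0) (X : P0) : mx (f X) = mx X := by
  have hc : mx (f (I 1)) * mx (f.symm (I 1)) = 1 := by
    have h1 := mx_f_mul f.symm (f (I 1))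
    rw [f.symm_apply_apply, mx_I, mx_f_mul f (I 1), mx_I, one_mul] at h1
    omega
  have hc1 : mx (f (I 1)) = 1 := by
    rcases Nat.eq_one_of_mul_eq_one_right hc with h
    exact h
  rw [mx_f_mul f X, hc1, mul_one]

lemma eq_I_one {Y : P0} (h : mx Y = 1) : Y = I 1 := by
  apply Subtype.ext
  ext a
  show a ∈ Y.1 ↔ a ∈ Finset.range 2
  simp only [Finset.mem_range]
  constructor
  · intro ha
    have := le_mx ha
    omega
  · intro ha
    interval_cases a
    · exact Y.2
    · have := mx_mem Y
      rwa [h] at this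

lemma f_I (f : P0 ≃+ P0) (n : ℕ) : f (I n) = I n := by
  have h1 : f (I 1) = I 1 := eq_I_one (by rw [mx_f, mx_I])
  induction n with
  | zero => rw [I_zero, map_zero]
  | succ k ih =>
      rw [← I_add, map_add, ih, h1]

/-- transfer of gap bounds through an automorphism -/
lemma maxgap_le_f (f : P0 ≃+ P0) (X : P0) : maxgap (f X).1 ≤ maxgap X.1 := by
  by_cases hm : mx X = 0
  · have hmf : mx (f X) = 0 := by rw [mx_f]; exact hm
    have : gapset (f X).1 = ∅ := by
      apply Set.eq_empty_iff_forall_notMem.2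
      intro g hg
      have h1 := gapset_le_max (f X).2 hg
      have h2 := hg.1
      rw [← mx_def] at h1
      omega
    rw [maxgap_eq, this]
    simp
  · have hne : (gapset X.1).Nonempty := by
      apply gapset_nonempty X.2
      rw [← mx_def]
      omega
    have hnef : (gapset (f X).1).Nonempty := by
      apply gapset_nonempty (f X).2
      rw [← mx_def, mx_f]
      omega
    set D := maxgap X.1 with hD
    have hb : ∀ g ∈ gapset X.1, g ≤ D := fun g hg => le_csSup (gapset_bdd _ X.2) hg
    have hDpos : 0 < D := by
      obtain ⟨g, hg⟩ := hne
      have := hb g hg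
      have := hg.1
      omega
    -- the equation for X
    have heqX : X + I (D - 1) = I (mx X + D - 1) := by
      apply Subtype.ext
      rw [coe_addP]
      show X.1 + Finset.range (D - 1 + 1) = Finset.range (mx X + D - 1 + 1)
      rw [show D - 1 + 1 = D by omega]
      have h := fill (X := X.1) X.2 (d := D) hDpos hb
      rw [h]
      congr 1
      rw [mx_def]
      omega
    have heqfX : f X + I (D - 1) = I (mx X + D - 1) := by
      have := congrArg f heqX
      rw [map_add, f_I, f_I] at this
      exact this
    -- deduce bounds on gaps of f X
    have hbf : ∀ g ∈ gapset (f X).1, g ≤ D := by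
      apply unfill (f X).2
      have h1 := congrArg Subtype.val heqfX
      rw [coe_addP] at h1
      show (f X).1 + Finset.range D = Finset.range ((f X).1.max' _ + D)
      have hmx : (f X).1.max' ⟨0, (f X).2⟩ = mx X := by rw [← mx_def, mx_f]
      rw [hmx]
      calc (f X).1 + Finset.range D
          = (f X).1 + Finset.range (D - 1 + 1) := by rw [show D - 1 + 1 = D by omega]
        _ = Finset.range (mx X + D - 1 + 1) := h1
        _ = Finset.range (mx X + D) := by congr 1; omega
    rw [maxgap_eq]
    exact csSup_le hnef hbf

/-- automorphisms of P_fin0(ℕ) preserve the maximum gap. -/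
theorem stmt15 (f : P0 ≃+ P0) (X : P0) : maxgap (f X).1 = maxgap X.1 := by
  apply le_antisymm (maxgap_le_f f X)
  have h := maxgap_le_f f.symm (f X)
  rwa [f.symm_apply_apply] at h
end

section
/- Let f be a monoid automorphism of P_fin0(ℕ) with f({0,2,3}) = {0,2,3}. Then for every X ∈ P_fin0(ℕ) with 1 ∈ X, we have 1 ∈ f(X); moreover f({0, a, a+1}) = {0, a, a+1} for every a ∈ ℕ. -/
open Pointwise

theorem mem_P0 {X : Finset ℕ} : X ∈ P0 ↔ (0 : ℕ) ∈ X := Iff.rfl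

/-!
The maximum `mx` is additive. Since `{0,1} + {0,2,3} = 4 • {0,1}`, the image of `{0,1}` has
maximum 1, so `f` fixes `{0,1}` and hence every interval `[0,n] = n • {0,1}`. As
`X + [0, mx X] = [0, 2 mx X]`, `f` preserves maxima; and as `X + [0,n] = [0, mx X + n]` exactly
when all gaps of `X` are at most `n + 1`, `f` preserves the largest gap.

The multiples `k • {0,2,3} = {0} ∪ [2,3k]` are fixed by `f` and miss 1, and once `1 ∈ X` and
`3k > mx X` the sum `X + k • {0,2,3}` is an interval. Its image `f X + k • {0,2,3}` is then the
same interval, which contains 1; this forces `1 ∈ f X`.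

For `a ≥ 2`, the image of `{0,a,a+1}` has maximum `a + 1`, largest gap exactly `a`, and (by the
first claim for `f⁻¹`) does not contain 1; the only such set is `{0,a,a+1}`.
-/

namespace P0

theorem ext {X Y : P0} (h : ∀ t, t ∈ (X : Finset ℕ) ↔ t ∈ (Y : Finset ℕ)) : X = Y :=
  Subtype.ext (Finset.ext h)

theorem zero_mem_coe (X : P0) : 0 ∈ (X : Finset ℕ) := X.2

theorem mem_coe_zero {t : ℕ} : t ∈ ((0 : P0) : Finset ℕ) ↔ t = 0 := Finset.mem_zero

theorem mem_coe_add {X Y : P0} {t : ℕ} :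
    t ∈ ((X + Y : P0) : Finset ℕ) ↔ ∃ x ∈ (X : Finset ℕ), ∃ y ∈ (Y : Finset ℕ), x + y = t :=
  Finset.mem_add

theorem one_mem_add_iff {X Y : P0} (hY : 1 ∉ (Y : Finset ℕ)) :
    1 ∈ ((X + Y : P0) : Finset ℕ) ↔ 1 ∈ (X : Finset ℕ) := by
  rw [mem_coe_add]
  constructor
  · rintro ⟨x, hx, y, hy, hxy⟩
    obtain rfl | rfl : y = 0 ∨ y = 1 := by omega
    · simpa [← hxy] using hx
    · exact absurd hy hY
  · exact fun h => ⟨1, h, 0, zero_mem_coe Y, rfl⟩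

theorem le_mx {X : P0} {x : ℕ} (hx : x ∈ (X : Finset ℕ)) : x ≤ mx X := Finset.le_max' _ _ hx

theorem mx_mem (X : P0) : mx X ∈ (X : Finset ℕ) := Finset.max'_mem _ _

theorem mx_eq {X : P0} {n : ℕ} (hn : n ∈ (X : Finset ℕ)) (h : ∀ x ∈ (X : Finset ℕ), x ≤ n) :
    mx X = n :=
  le_antisymm (Finset.max'_le _ _ _ h) (le_mx hn)

theorem mx_zero : mx 0 = 0 := mx_eq (mem_coe_zero.2 rfl) fun _ hx => (mem_coe_zero.1 hx).le

theorem mx_add (X Y : P0) : mx (X + Y) = mx X + mx Y := by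
  refine mx_eq (mem_coe_add.2 ⟨_, mx_mem X, _, mx_mem Y, rfl⟩) ?_
  rintro _ h
  obtain ⟨x, hx, y, hy, rfl⟩ := mem_coe_add.1 h
  exact Nat.add_le_add (le_mx hx) (le_mx hy)

theorem mx_nsmul (k : ℕ) (X : P0) : mx (k • X) = k * mx X := by
  induction k with
  | zero => rw [zero_nsmul, mx_zero, zero_mul]
  | succ k ih => rw [succ_nsmul, mx_add, ih, Nat.succ_mul]

def interval (n : ℕ) : P0 := ⟨Finset.range (n + 1), mem_P0.2 (by simp)⟩

theorem mem_interval {n t : ℕ} : t ∈ (interval n : Finset ℕ) ↔ t ≤ n := by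
  simp [interval]

theorem mx_interval (n : ℕ) : mx (interval n) = n :=
  mx_eq (mem_interval.2 le_rfl) fun _ hx => mem_interval.1 hx

theorem interval_add (m n : ℕ) : interval m + interval n = interval (m + n) := by
  refine ext fun t => ?_
  simp only [mem_coe_add, mem_interval]
  constructor
  · rintro ⟨x, hx, y, hy, rfl⟩
    omega
  · exact fun ht => ⟨min t m, by omega, t - min t m, by omega, by omega⟩

theorem nsmul_interval_one (n : ℕ) : n • interval 1 = interval n := by
  induction n with
  | zero => exact ext fun t => by rw [zero_nsmul, mem_coe_zero, mem_interval, Nat.le_zero]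
  | succ n ih => rw [succ_nsmul, ih, interval_add]

theorem eq_interval_one_of_mx_eq_one {X : P0} (h : mx X = 1) : X = interval 1 := by
  refine ext fun t => ⟨fun ht => mem_interval.2 (h ▸ le_mx ht), fun ht => ?_⟩
  obtain rfl | rfl : t = 0 ∨ t = 1 := by have := mem_interval.1 ht; omega
  · exact zero_mem_coe X
  · exact h ▸ mx_mem X

def triple (a : ℕ) : P0 := ⟨{0, a, a + 1}, mem_P0.2 (by simp)⟩

theorem mem_triple {a t : ℕ} : t ∈ (triple a : Finset ℕ) ↔ t = 0 ∨ t = a ∨ t = a + 1 := by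
  simp [triple]

theorem mx_triple (a : ℕ) : mx (triple a) = a + 1 :=
  mx_eq (mem_triple.2 (by omega)) fun _ hx => by rcases mem_triple.1 hx with h | h | h <;> omega

theorem mem_nsmul_triple_two {k t : ℕ} :
    t ∈ ((k • triple 2 : P0) : Finset ℕ) ↔ t = 0 ∨ 2 ≤ t ∧ t ≤ 3 * k := by
  induction k generalizing t with
  | zero => rw [zero_nsmul, mem_coe_zero]; omega
  | succ k ih =>
    simp only [succ_nsmul, mem_coe_add, ih, mem_triple]
    constructor
    · rintro ⟨x, hx, c, hc, rfl⟩
      omega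
    · rintro (rfl | ⟨h2, h3⟩)
      · exact ⟨0, by omega, 0, by omega, rfl⟩
      rcases le_or_gt t (3 * k) with h | h
      · exact ⟨t, by omega, 0, by omega, rfl⟩
      by_cases h' : t = 3 * k + 3
      · exact ⟨3 * k, by omega, 3, by omega, by omega⟩
      · exact ⟨t - 2, by omega, 2, by omega, by omega⟩

theorem add_nsmul_triple_two_eq_interval {X : P0} {k : ℕ} (h1 : 1 ∈ (X : Finset ℕ))
    (hk : mx X < 3 * k) : X + k • triple 2 = interval (mx X + 3 * k) := by
  refine ext fun t => ?_
  simp only [mem_coe_add, mem_interval, mem_nsmul_triple_two]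
  constructor
  · rintro ⟨x, hx, s, hs, rfl⟩
    have := le_mx hx
    omega
  · intro ht
    rcases lt_or_ge t 2 with h | h
    · obtain rfl | rfl : t = 0 ∨ t = 1 := by omega
      exacts [⟨0, zero_mem_coe X, 0, by omega, rfl⟩, ⟨1, h1, 0, by omega, rfl⟩]
    rcases le_or_gt t (3 * k) with h' | h'
    · exact ⟨0, zero_mem_coe X, t, by omega, by omega⟩
    · exact ⟨mx X, mx_mem X, t - mx X, by omega, by omega⟩

/-- Every gap between consecutive elements of `X` is at most `g`. -/
def MaxGapLe (X : P0) (g : ℕ) : Prop :=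
  ∀ t < mx X, ∃ x ∈ (X : Finset ℕ), x ≤ t ∧ t < x + g

theorem add_interval_eq_interval_iff (X : P0) (n : ℕ) :
    X + interval n = interval (mx X + n) ↔ MaxGapLe X (n + 1) := by
  constructor
  · intro h t ht
    have : t ∈ ((X + interval n : P0) : Finset ℕ) := by
      rw [h]
      exact mem_interval.2 (by omega)
    obtain ⟨x, hx, s, hs, rfl⟩ := mem_coe_add.1 this
    exact ⟨x, hx, by omega, by have := mem_interval.1 hs; omega⟩
  · refine fun h => ext fun t => ?_
    simp only [mem_coe_add, mem_interval]
    constructor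
    · rintro ⟨x, hx, s, hs, rfl⟩
      have := le_mx hx
      omega
    · intro ht
      rcases lt_or_ge t (mx X) with ht' | ht'
      · obtain ⟨x, hx, hxt, htx⟩ := h t ht'
        exact ⟨x, hx, t - x, by omega, by omega⟩
      · exact ⟨mx X, mx_mem X, t - mx X, by omega, by omega⟩

theorem maxGapLe_mx_succ (X : P0) : MaxGapLe X (mx X + 1) :=
  fun _ ht => ⟨0, zero_mem_coe X, Nat.zero_le _, by omega⟩

theorem maxGapLe_triple {a : ℕ} (ha : 0 < a) : MaxGapLe (triple a) a := by
  intro t ht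
  rw [mx_triple] at ht
  rcases lt_or_ge t a with h | h
  · exact ⟨0, mem_triple.2 (by omega), by omega, by omega⟩
  · exact ⟨a, mem_triple.2 (by omega), by omega, by omega⟩

theorem not_maxGapLe_triple (a : ℕ) : ¬ MaxGapLe (triple (a + 1)) a := by
  intro h
  obtain ⟨x, hx, hxa, hax⟩ := h a (by rw [mx_triple]; omega)
  rcases mem_triple.1 hx with rfl | rfl | rfl <;> omega

theorem eq_triple_of_maxGapLe {E : P0} {n : ℕ} (hmx : mx E = n + 3) (h1 : 1 ∉ (E : Finset ℕ))
    (hle : MaxGapLe E (n + 2)) (hnot : ¬ MaxGapLe E (n + 1)) : E = triple (n + 2) := by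
  have hmid : ∀ e ∈ (E : Finset ℕ), e ≤ 1 ∨ n + 2 ≤ e := by
    intro e he
    by_contra! h
    refine hnot fun t ht => ?_
    rcases lt_or_ge t (n + 1) with ht' | ht'
    · exact ⟨0, zero_mem_coe E, by omega, by omega⟩
    · exact ⟨e, he, by omega, by omega⟩
  have hsub : ∀ e ∈ (E : Finset ℕ), e = 0 ∨ e = n + 2 ∨ e = n + 3 := by
    intro e he
    have := hmx ▸ le_mx he
    have := hmid e he
    have : e ≠ 1 := fun h => h1 (h ▸ he)
    omega
  have ha : n + 2 ∈ (E : Finset ℕ) := by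
    obtain ⟨x, hx, hxt, htx⟩ := hle (n + 2) (by omega)
    obtain rfl : x = n + 2 := by have := hsub x hx; omega
    exact hx
  refine ext fun t => ⟨fun ht => mem_triple.2 (hsub t ht), fun ht => ?_⟩
  rcases mem_triple.1 ht with rfl | rfl | rfl
  · exact zero_mem_coe E
  · exact ha
  · exact hmx ▸ mx_mem E

section Hom

variable {F : Type*} [FunLike F P0 P0] [AddMonoidHomClass F P0 P0]

theorem map_interval_one {f : F} (hf : f (triple 2) = triple 2) : f (interval 1) = interval 1 := by
  have h : interval 1 + triple 2 = 4 • interval 1 := Subtype.ext (by decide)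
  have h' := congrArg (mx ∘ f) h
  simp only [Function.comp_apply, map_add, map_nsmul, hf, mx_add, mx_nsmul, mx_triple] at h'
  exact eq_interval_one_of_mx_eq_one (by omega)

theorem map_interval {f : F} (hf : f (triple 2) = triple 2) (n : ℕ) :
    f (interval n) = interval n := by
  rw [← nsmul_interval_one, map_nsmul, map_interval_one hf]

theorem mx_map {f : F} (hI : ∀ n, f (interval n) = interval n) (X : P0) : mx (f X) = mx X := by
  have h := congrArg (mx ∘ f) ((add_interval_eq_interval_iff X (mx X)).2 (maxGapLe_mx_succ X))
  simp only [Function.comp_apply, map_add, hI, mx_add, mx_interval] at h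
  omega

theorem one_mem_map {f : F} (hf : f (triple 2) = triple 2) {X : P0}
    (h1 : 1 ∈ (X : Finset ℕ)) : 1 ∈ (f X : Finset ℕ) := by
  have hT : f ((mx X + 1) • triple 2) = (mx X + 1) • triple 2 := by rw [map_nsmul, hf]
  have h : f X + (mx X + 1) • triple 2 = interval (mx X + 3 * (mx X + 1)) := by
    rw [← hT, ← map_add, add_nsmul_triple_two_eq_interval h1 (by omega), map_interval hf]
  rw [← one_mem_add_iff (Y := (mx X + 1) • triple 2) (by rw [mem_nsmul_triple_two]; omega), h]
  exact mem_interval.2 (by omega)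

end Hom

theorem maxGapLe_map_iff (f : P0 ≃+ P0) (hI : ∀ n, f (interval n) = interval n) (X : P0)
    (n : ℕ) : MaxGapLe (f X) (n + 1) ↔ MaxGapLe X (n + 1) := by
  rw [← add_interval_eq_interval_iff, ← add_interval_eq_interval_iff, mx_map hI,
    ← f.injective.eq_iff (a := X + interval n), map_add, hI, hI]

theorem map_triple (f : P0 ≃+ P0) (hf : f (triple 2) = triple 2) (a : ℕ) :
    f (triple a) = triple a := by
  have hI := map_interval hf
  match a with
  | 0 => rw [show triple 0 = interval 1 from Subtype.ext (by decide), hI]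
  | 1 => rw [show triple 1 = interval 2 from Subtype.ext (by decide), hI]
  | n + 2 =>
    apply eq_triple_of_maxGapLe
    · rw [mx_map hI, mx_triple]
    · intro h
      have := one_mem_map (f := f.symm) (f.symm_apply_eq.2 hf.symm) h
      simp [mem_triple] at this
    · rw [maxGapLe_map_iff f hI]
      exact maxGapLe_triple (by omega)
    · rw [maxGapLe_map_iff f hI]
      exact not_maxGapLe_triple (n + 1)

end P0

/-- if an automorphism `f` of P_fin0(ℕ) fixes `{0,2,3}`, then
`1 ∈ X` implies `1 ∈ f(X)`, and `f` fixes every set `{0, a, a+1}`. -/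
theorem stmt18 (f : P0 ≃+ P0)
    (hf : f ⟨({0, 2, 3} : Finset ℕ), by simp [mem_P0]⟩ = ⟨({0, 2, 3} : Finset ℕ), by simp [mem_P0]⟩) :
    (∀ X : P0, (1 : ℕ) ∈ X.1 → (1 : ℕ) ∈ (f X).1) ∧
    (∀ a : ℕ, f ⟨({0, a, a + 1} : Finset ℕ), by simp [mem_P0]⟩
        = ⟨({0, a, a + 1} : Finset ℕ), by simp [mem_P0]⟩) := by
  exact ⟨fun _ h1 => P0.one_mem_map hf h1, P0.map_triple f hf⟩
end
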